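/- arXiv:2205.09589 — 3 statements merged into one kernel-verified Lean document; each statement's English description precedes it below -/
import Mathlib

section
/- Suppose for each p ∈ C the map q ↦ Φ(v, q) is differentiable and concave in the second argument. Then L_Ω^Φ(v, p) ≤ L_Ω(∇₂Φ(v, p), p), where L_Ω(u, p) := Ω*(u) + Ω(p) − ⟨u, p⟩ is the usual Fenchel-Young loss with Ω*(u) := sup_{q ∈ C} (⟨u, q⟩ − Ω(q)). -/
/-!
Concavity of `Φ(v, ·)` puts it below its tangent plane at `p`:
`Φ(v, q) ≤ Φ(v, p) + ⟨u, q - p⟩` with `u = ∇₂Φ(v, p)`. Subtracting `Ω q` and taking the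
supremum over `C` bounds the first supremum by `Ω*(u) + Φ(v, p) - ⟨u, p⟩`, which is the claim.
-/

theorem ConcaveOn.le_add_of_hasFDerivAt {E : Type*} [NormedAddCommGroup E] [NormedSpace ℝ E]
    {s : Set E} {f : E → ℝ} {f' : E →L[ℝ] ℝ} {p q : E} (hf : ConcaveOn ℝ s f)
    (hp : p ∈ s) (hq : q ∈ s) (hf' : HasFDerivAt f f' p) :
    f q ≤ f p + f' (q - p) := by
  set ℓ : ℝ →ᵃ[ℝ] E := AffineMap.lineMap p q
  have hconc : ConcaveOn ℝ (Set.Icc 0 1) (f ∘ ℓ) :=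
    (hf.comp_affineMap ℓ).subset (fun _ ht => hf.1.lineMap_mem hp hq ht) (convex_Icc 0 1)
  have hderiv : HasDerivAt (f ∘ ℓ) (f' (q - p)) 0 := by
    rw [← AffineMap.lineMap_apply_zero (k := ℝ) p q] at hf'
    exact hf'.comp_hasDerivAt 0 AffineMap.hasDerivAt_lineMap
  have hslope := hconc.slope_le_of_hasDerivAt (by simp) (by simp) zero_lt_one hderiv
  rw [slope_def_field] at hslope
  simp only [Function.comp_apply, ℓ, AffineMap.lineMap_apply_one, AffineMap.lineMap_apply_zero,
    sub_zero, div_one] at hslope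
  linarith

theorem ConcaveOn.le_add_inner_of_hasGradientAt {E : Type*} [NormedAddCommGroup E]
    [InnerProductSpace ℝ E] [CompleteSpace E] {s : Set E} {f : E → ℝ} {f' p q : E}
    (hf : ConcaveOn ℝ s f) (hp : p ∈ s) (hq : q ∈ s) (hf' : HasGradientAt f f' p) :
    f q ≤ f p + inner ℝ f' (q - p) :=
  hf.le_add_of_hasFDerivAt hp hq hf'.hasFDerivAt

theorem csSup_image_le_csSup_image_add {α : Type*} {s : Set α} {f g : α → ℝ} {c : ℝ}
    (hs : s.Nonempty) (hg : BddAbove (g '' s)) (hfg : ∀ x ∈ s, f x ≤ g x + c) :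
    sSup (f '' s) ≤ sSup (g '' s) + c :=
  csSup_le (hs.image f) <| Set.forall_mem_image.2 fun x hx =>
    (hfg x hx).trans (by gcongr; exact le_csSup hg ⟨x, hx, rfl⟩)

theorem stmt_10_general {d k : ℕ} (C : Set (EuclideanSpace ℝ (Fin k))) (hC : C.Nonempty)
    (Ω : EuclideanSpace ℝ (Fin k) → ℝ)
    (Φ : (Fin d → ℝ) → EuclideanSpace ℝ (Fin k) → ℝ)
    (v : Fin d → ℝ)
    (hdiff : Differentiable ℝ (fun q => Φ v q))
    (hconc : ConcaveOn ℝ Set.univ (fun q => Φ v q))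
    (p : EuclideanSpace ℝ (Fin k))
    (hbdd2 : BddAbove
      ((fun q => (inner ℝ (gradient (fun q' => Φ v q') p) q : ℝ) - Ω q) '' C)) :
    sSup ((fun q => Φ v q - Ω q) '' C) + Ω p - Φ v p
      ≤ sSup ((fun q => (inner ℝ (gradient (fun q' => Φ v q') p) q : ℝ) - Ω q) '' C)
        + Ω p - (inner ℝ (gradient (fun q' => Φ v q') p) p : ℝ) := by
  set u := gradient (fun q' => Φ v q') p
  have tangent (q : EuclideanSpace ℝ (Fin k)) : Φ v q ≤ Φ v p + inner ℝ u (q - p) :=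
    hconc.le_add_inner_of_hasGradientAt trivial trivial (hdiff p).hasGradientAt
  have hsup := csSup_image_le_csSup_image_add (f := fun q => Φ v q - Ω q)
    (c := Φ v p - inner ℝ u p) hC hbdd2 fun q _ => by
      have := tangent q
      rw [inner_sub_right] at this
      linarith
  linarith

/-- Linearization upper bound: L_Ω^Φ(v, p) ≤ L_Ω(∇₂Φ(v, p), p) for concave Φ(v,·). -/
theorem stmt_10 {d k : ℕ} (C : Set (EuclideanSpace ℝ (Fin k))) (hC : C.Nonempty)
    (hCconv : Convex ℝ C)
    (Ω : EuclideanSpace ℝ (Fin k) → ℝ)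
    (Φ : (Fin d → ℝ) → EuclideanSpace ℝ (Fin k) → ℝ)
    (v : Fin d → ℝ)
    (hdiff : Differentiable ℝ (fun q => Φ v q))
    (hconc : ConcaveOn ℝ Set.univ (fun q => Φ v q))
    (hbdd1 : BddAbove ((fun q => Φ v q - Ω q) '' C))
    (p : EuclideanSpace ℝ (Fin k)) (hp : p ∈ C)
    (hbdd2 : BddAbove
      ((fun q => (inner ℝ (gradient (fun q' => Φ v q') p) q : ℝ) - Ω q) '' C)) :
    sSup ((fun q => Φ v q - Ω q) '' C) + Ω p - Φ v p
      ≤ sSup ((fun q => (inner ℝ (gradient (fun q' => Φ v q') p) q : ℝ) - Ω q) '' C)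
        + Ω p - (inner ℝ (gradient (fun q' => Φ v q') p) p : ℝ) :=
  stmt_10_general C hC Ω Φ v hdiff hconc p hbdd2
end

section
/- Assume for each v the function p ↦ Φ(v, p) − Ω(p) is γ-strongly concave on a compact convex set C with unique maximizer p*(v), and Φ is β-smooth jointly in (v, p) (its gradient is β-Lipschitz). Then the map v ↦ p*(v) is (β/γ)-Lipschitz: ‖p*(v₂) − p*(v₁)‖ ≤ (β/γ)‖v₂ − v₁‖ for all v₁, v₂. -/
/-!
Write `fᵥ := Ω - Φ v`, a `γ`-strongly convex function minimized on `C` at `p*(v)`. Strong convexity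
gives quadratic growth at a minimizer, so adding the two growth inequalities for `fᵥ₁` at `p*(v₁)`
and `fᵥ₂` at `p*(v₂)` yields `γ ‖Δp‖² ≤ (fᵥ₁ - fᵥ₂)(p*(v₂)) - (fᵥ₁ - fᵥ₂)(p*(v₁))`. The difference
`fᵥ₁ - fᵥ₂ = Φ v₂ - Φ v₁` has gradient bounded by `β ‖v₂ - v₁‖`, so by the mean value inequality the
right-hand side is at most `β ‖v₂ - v₁‖ ‖Δp‖`.
-/

open Filter Topology NNReal

section StrongConvexity

variable {E : Type*} [NormedAddCommGroup E] [NormedSpace ℝ E] {C : Set E} {m : ℝ}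

lemma StrongConvexOn.add_sq_norm_sub_le_of_isMinOn {f : E → ℝ} (hf : StrongConvexOn C m f)
    {p q : E} (hp : p ∈ C) (hq : q ∈ C) (hmin : IsMinOn f C q) :
    f q + m / 2 * ‖p - q‖ ^ 2 ≤ f p := by
  set K := m / 2 * ‖p - q‖ ^ 2
  -- Comparing `f q` with `f` at `t • p + (1 - t) • q` gives `f q + (1 - t) K ≤ f p`; let `t → 0⁺`.
  have hgrowth : ∀ t ∈ Set.Ioo (0 : ℝ) 1, f q + (1 - t) * K ≤ f p := by
    rintro t ⟨ht₀, ht₁⟩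
    have hconv := hf.2 hp hq ht₀.le (sub_nonneg.2 ht₁.le) (add_sub_cancel t 1)
    have hle : f q ≤ f (t • p + (1 - t) • q) :=
      isMinOn_iff.1 hmin _ (hf.1 hp hq ht₀.le (sub_nonneg.2 ht₁.le) (add_sub_cancel t 1))
    simp only [smul_eq_mul] at hconv
    have : t * (f q + (1 - t) * K) ≤ t * f p := by linear_combination hle.trans hconv
    exact le_of_mul_le_mul_left this ht₀
  have hlim : Tendsto (fun t : ℝ => f q + (1 - t) * K) (𝓝[>] 0) (𝓝 (f q + K)) := by
    have : Continuous fun t : ℝ => f q + (1 - t) * K := by fun_prop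
    simpa using (this.tendsto 0).mono_left nhdsWithin_le_nhds
  exact le_of_tendsto hlim (eventually_of_mem (Ioo_mem_nhdsGT one_pos) hgrowth)

lemma StrongConvexOn.mul_norm_sub_le_of_isMinOn {f g : E → ℝ} (hf : StrongConvexOn C m f)
    (hg : StrongConvexOn C m g) {x y : E} (hx : x ∈ C) (hy : y ∈ C) (hfx : IsMinOn f C x)
    (hgy : IsMinOn g C y) {K : ℝ≥0} (hfg : LipschitzOnWith K (f - g) C) :
    m * ‖y - x‖ ≤ K := by
  have hfy := hf.add_sq_norm_sub_le_of_isMinOn hy hx hfx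
  have hgx := hg.add_sq_norm_sub_le_of_isMinOn hx hy hgy
  have hdiff : (f - g) y - (f - g) x ≤ K * ‖y - x‖ := by
    simpa [Real.dist_eq, dist_eq_norm] using (le_abs_self _).trans (hfg.dist_le_mul y hy x hx)
  rw [norm_sub_rev] at hgx
  have hsq : m * ‖y - x‖ * ‖y - x‖ ≤ K * ‖y - x‖ := by
    simp only [Pi.sub_apply] at hdiff
    linear_combination hfy + hgx + hdiff
  rcases (norm_nonneg (y - x)).eq_or_lt with h0 | hpos
  · rw [← h0, mul_zero]
    exact K.2
  · exact le_of_mul_le_mul_right hsq hpos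

end StrongConvexity

lemma lipschitzWith_sub_of_norm_gradient_sub_le {F : Type*} [NormedAddCommGroup F]
    [InnerProductSpace ℝ F] [CompleteSpace F] {f g : F → ℝ} (hf : Differentiable ℝ f)
    (hg : Differentiable ℝ g) {K : ℝ≥0} (h : ∀ x, ‖gradient f x - gradient g x‖ ≤ K) :
    LipschitzWith K (f - g) := by
  refine lipschitzWith_of_nnnorm_fderiv_le (hf.sub hg) fun x => ?_
  rw [← NNReal.coe_le_coe, coe_nnnorm, fderiv_sub (hf x) (hg x)]
  simpa only [gradient, ← map_sub, LinearIsometryEquiv.norm_map] using h x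

theorem stmt_17_general {d k : ℕ} (C : Set (EuclideanSpace ℝ (Fin k)))
    (γ β : ℝ) (hγ : 0 < γ) (hβ : 0 < β)
    (Ω : EuclideanSpace ℝ (Fin k) → ℝ) (hΩ : StrongConvexOn C γ Ω)
    (Φ : EuclideanSpace ℝ (Fin d) → EuclideanSpace ℝ (Fin k) → ℝ)
    (hdiff : ∀ v, Differentiable ℝ (fun p => Φ v p))
    (hgradlip : ∀ v₁ v₂ p,
      ‖gradient (fun p' => Φ v₂ p') p - gradient (fun p' => Φ v₁ p') p‖
        ≤ β * ‖v₂ - v₁‖)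
    (hconc : ∀ v, ConcaveOn ℝ C (fun p => Φ v p))
    (pstar : EuclideanSpace ℝ (Fin d) → EuclideanSpace ℝ (Fin k))
    (hmem : ∀ v, pstar v ∈ C)
    (hmax : ∀ v, ∀ p ∈ C, Φ v p - Ω p ≤ Φ v (pstar v) - Ω (pstar v)) :
    ∀ v₁ v₂, ‖pstar v₂ - pstar v₁‖ ≤ β / γ * ‖v₂ - v₁‖ := by
  intro v₁ v₂
  have hconvex : ∀ v, StrongConvexOn C γ (fun p => Ω p - Φ v p) := fun v => by
    simpa only [add_zero] using! hΩ.sub (hconc v).uniformConcaveOn_zero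
  have hmin : ∀ v, IsMinOn (fun p => Ω p - Φ v p) C (pstar v) := fun v =>
    isMinOn_iff.2 fun p hp => by linarith [hmax v p hp]
  let K : ℝ≥0 := ⟨β * ‖v₂ - v₁‖, by positivity⟩
  have hlip : LipschitzWith K (fun p => Φ v₂ p - Φ v₁ p) :=
    lipschitzWith_sub_of_norm_gradient_sub_le (hdiff v₂) (hdiff v₁) (hgradlip v₁ v₂)
  have hstab := (hconvex v₁).mul_norm_sub_le_of_isMinOn (hconvex v₂) (hmem v₁) (hmem v₂)
    (hmin v₁) (hmin v₂) (K := K) (by simpa [Pi.sub_def] using hlip.lipschitzOnWith)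
  rw [div_mul_eq_mul_div, le_div_iff₀ hγ, mul_comm]
  exact hstab

/-- Lipschitzness of the regularized argmax map. -/
theorem stmt_17 {d k : ℕ} (C : Set (EuclideanSpace ℝ (Fin k)))
    (hCcompact : IsCompact C) (hCconv : Convex ℝ C)
    (γ β : ℝ) (hγ : 0 < γ) (hβ : 0 < β)
    (Ω : EuclideanSpace ℝ (Fin k) → ℝ) (hΩ : StrongConvexOn C γ Ω)
    (Φ : EuclideanSpace ℝ (Fin d) → EuclideanSpace ℝ (Fin k) → ℝ)
    (hdiff : ∀ v, Differentiable ℝ (fun p => Φ v p))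
    (hgradlip : ∀ v₁ v₂ p,
      ‖gradient (fun p' => Φ v₂ p') p - gradient (fun p' => Φ v₁ p') p‖
        ≤ β * ‖v₂ - v₁‖)
    (hconc : ∀ v, ConcaveOn ℝ C (fun p => Φ v p))
    (pstar : EuclideanSpace ℝ (Fin d) → EuclideanSpace ℝ (Fin k))
    (hmem : ∀ v, pstar v ∈ C)
    (hmax : ∀ v, ∀ p ∈ C, Φ v p - Ω p ≤ Φ v (pstar v) - Ω (pstar v))
    (huniq : ∀ v, ∀ p ∈ C, Φ v p - Ω p = Φ v (pstar v) - Ω (pstar v) → p = pstar v) :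
    ∀ v₁ v₂, ‖pstar v₂ - pstar v₁‖ ≤ β / γ * ‖v₂ - v₁‖ :=
  stmt_17_general C γ β hγ hβ Ω hΩ Φ hdiff hgradlip hconc pstar hmem hmax
end

section
/- Let Φ(v, p) = ⟨v, φ(p)⟩ be a linear-concave energy and L_Ω^Φ(v, y) = Ω^Φ(v) + Ω(y) − ⟨v, φ(y)⟩. Suppose the pointwise surrogate risk ℓ(v) := E_{Y∼q}[L_Ω^Φ(v, Y)] is M-smooth in v, nonnegative, and ∇Ω^Φ(v) = φ(p^Φ_Ω(v)) where p^Φ_Ω(v) is the maximizer. Then ℓ(v) − inf_{v'} ℓ(v') ≥ (1/(2M))‖φ(p^Φ_Ω(v)) − E_{Y∼q}[φ(Y)]‖². -/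
/-!
Averaging `L` over `q` turns `ℓ` into `Ωφ` plus an affine function of `v`, so
`∇ℓ v = φ (pstar v) - E_q[φ Y]`. For an `M`-smooth function bounded below, the descent lemma shows
that one gradient step of length `1 / M` lowers the value by at least `‖∇ℓ v‖² / (2M)`, and the
infimum lies below the value reached.
-/

open InnerProductSpace

section Smooth

variable {F : Type*} [NormedAddCommGroup F] [InnerProductSpace ℝ F] [CompleteSpace F]
  {f : F → ℝ} {M : ℝ}

theorem HasGradientAt.hasDerivAt_comp_line {g x d : F} {t : ℝ}
    (hf : HasGradientAt f g (x + t • d)) :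
    HasDerivAt (fun s : ℝ => f (x + s • d)) ⟪g, d⟫_ℝ t := by
  have hline : HasDerivAt (fun s : ℝ => x + s • d) d t := by
    simpa using ((hasDerivAt_id t).smul_const d).const_add x
  exact hf.hasFDerivAt.comp_hasDerivAt t hline

theorem HasGradientAt.add_const_sub_inner {g u : F} (hf : HasGradientAt f g u) (c : ℝ) (m : F) :
    HasGradientAt (fun w => f w + c - ⟪w, m⟫_ℝ) (g - m) u := by
  have hinner : HasFDerivAt (fun w => ⟪w, m⟫_ℝ) (toDual ℝ F m) u := by
    convert (toDual ℝ F m).hasFDerivAt using 1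
    exact funext fun w => by rw [toDual_apply_apply, real_inner_comm]
  rw [hasGradientAt_iff_hasFDerivAt, map_sub]
  exact (hf.hasFDerivAt.add_const c).sub hinner

theorem le_add_inner_gradient_add_sq_of_lipschitz_gradient (hf : Differentiable ℝ f)
    (hsmooth : ∀ v w, ‖gradient f v - gradient f w‖ ≤ M * ‖v - w‖) (x y : F) :
    f y ≤ f x + ⟪gradient f x, y - x⟫_ℝ + M / 2 * ‖y - x‖ ^ 2 := by
  set d := y - x
  let h : ℝ → ℝ := fun t => f (x + t • d) - t * ⟪gradient f x, d⟫_ℝ - M / 2 * ‖d‖ ^ 2 * t ^ 2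
  have hderiv : ∀ t, HasDerivAt h
      (⟪gradient f (x + t • d) - gradient f x, d⟫_ℝ - M * ‖d‖ ^ 2 * t) t := by
    intro t
    have hquad := (hasDerivAt_pow 2 t).const_mul (M / 2 * ‖d‖ ^ 2)
    refine ((((hf _).hasGradientAt.hasDerivAt_comp_line).sub
      ((hasDerivAt_id t).mul_const ⟪gradient f x, d⟫_ℝ)).sub hquad).congr_deriv ?_
    rw [inner_sub_left]
    push_cast
    ring
  have hanti : AntitoneOn h (Set.Icc 0 1) := by
    refine antitoneOn_of_deriv_nonpos (convex_Icc 0 1)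
      (fun t _ => (hderiv t).continuousAt.continuousWithinAt)
      (fun t _ => (hderiv t).differentiableAt.differentiableWithinAt) fun t ht => ?_
    rw [interior_Icc] at ht
    rw [(hderiv t).deriv, sub_nonpos]
    calc ⟪gradient f (x + t • d) - gradient f x, d⟫_ℝ
        ≤ ‖gradient f (x + t • d) - gradient f x‖ * ‖d‖ := real_inner_le_norm _ _
      _ ≤ M * ‖t • d‖ * ‖d‖ := by
          gcongr
          simpa using hsmooth (x + t • d) x
      _ = M * ‖d‖ ^ 2 * t := by
          rw [norm_smul, Real.norm_of_nonneg ht.1.le]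
          ring
  have h01 := hanti (Set.left_mem_Icc.2 zero_le_one) (Set.right_mem_Icc.2 zero_le_one) zero_le_one
  simp only [h, d, one_smul, add_sub_cancel, zero_smul, add_zero] at h01
  linarith

theorem one_div_mul_sq_norm_gradient_le_sub_sInf (hf : Differentiable ℝ f) (hM : 0 < M)
    (hsmooth : ∀ v w, ‖gradient f v - gradient f w‖ ≤ M * ‖v - w‖)
    (hbdd : BddBelow (Set.range f)) (v : F) :
    1 / (2 * M) * ‖gradient f v‖ ^ 2 ≤ f v - sInf (Set.range f) := by
  set g := gradient f v
  have hstep := le_add_inner_gradient_add_sq_of_lipschitz_gradient hf hsmooth v (v - M⁻¹ • g)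
  have hinf : sInf (Set.range f) ≤ f (v - M⁻¹ • g) := csInf_le hbdd ⟨_, rfl⟩
  rw [sub_sub_cancel_left, inner_neg_right, real_inner_smul_right, real_inner_self_eq_norm_sq,
    norm_neg, norm_smul, Real.norm_of_nonneg (inv_nonneg.2 hM.le)] at hstep
  have hval : M⁻¹ * ‖g‖ ^ 2 - M / 2 * (M⁻¹ * ‖g‖) ^ 2 = 1 / (2 * M) * ‖g‖ ^ 2 := by
    field_simp
    ring
  linarith

end Smooth

theorem Finset.sum_mul_add_sub_inner {ι E : Type*} [NormedAddCommGroup E] [InnerProductSpace ℝ E]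
    (s : Finset ι) {w : ι → ℝ} (hw : ∑ i ∈ s, w i = 1) (a : ℝ) (b : ι → ℝ) (u : E) (x : ι → E) :
    ∑ i ∈ s, w i * (a + b i - ⟪u, x i⟫_ℝ) = a + ∑ i ∈ s, w i * b i - ⟪u, ∑ i ∈ s, w i • x i⟫_ℝ := by
  simp only [mul_sub, mul_add, Finset.sum_sub_distrib, Finset.sum_add_distrib, ← Finset.sum_mul,
    hw, one_mul, inner_sum, real_inner_smul_right]

theorem stmt_18_general {d k : ℕ} (Y : Finset (EuclideanSpace ℝ (Fin k)))
    (q : EuclideanSpace ℝ (Fin k) → ℝ)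
    (hq1 : ∑ y ∈ Y, q y = 1)
    (φ : EuclideanSpace ℝ (Fin k) → EuclideanSpace ℝ (Fin d))
    (Ω : EuclideanSpace ℝ (Fin k) → ℝ)
    (Ωφ : EuclideanSpace ℝ (Fin d) → ℝ)
    (pstar : EuclideanSpace ℝ (Fin d) → EuclideanSpace ℝ (Fin k))
    (hΩφdiff : Differentiable ℝ Ωφ)
    (hgrad : ∀ v, gradient Ωφ v = φ (pstar v))
    (L : EuclideanSpace ℝ (Fin d) → EuclideanSpace ℝ (Fin k) → ℝ)
    (hL : ∀ v y, L v y = Ωφ v + Ω y - (inner ℝ v (φ y) : ℝ))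
    (ℓ : EuclideanSpace ℝ (Fin d) → ℝ)
    (hℓ : ∀ v, ℓ v = ∑ y ∈ Y, q y * L v y)
    (M : ℝ) (hM : 0 < M)
    (hsmooth : ∀ v₁ v₂, ‖gradient ℓ v₁ - gradient ℓ v₂‖ ≤ M * ‖v₁ - v₂‖)
    (hnonneg : ∀ v, 0 ≤ ℓ v) :
    ∀ v, ℓ v - sInf (Set.range ℓ)
      ≥ 1 / (2 * M) * ‖φ (pstar v) - ∑ y ∈ Y, q y • φ y‖ ^ 2 := by
  intro v
  set m := ∑ y ∈ Y, q y • φ y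
  have hℓ_eq : ℓ = fun u => Ωφ u + ∑ y ∈ Y, q y * Ω y - ⟪u, m⟫_ℝ := funext fun u => by
    simp only [hℓ, hL, Y.sum_mul_add_sub_inner hq1, m]
  have hℓ_grad (u) : HasGradientAt ℓ (φ (pstar u) - m) u := by
    rw [hℓ_eq, ← hgrad]
    exact (hΩφdiff u).hasGradientAt.add_const_sub_inner _ m
  have hbdd : BddBelow (Set.range ℓ) := ⟨0, by rintro _ ⟨u, rfl⟩; exact hnonneg u⟩
  have hdesc := one_div_mul_sq_norm_gradient_le_sub_sInf
    (fun u => (hℓ_grad u).differentiableAt) hM hsmooth hbdd v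
  rwa [(hℓ_grad v).gradient] at hdesc

/-- Bound on the pointwise surrogate excess risk for linear-concave energies. -/
theorem stmt_18 {d k : ℕ} (Y : Finset (EuclideanSpace ℝ (Fin k)))
    (hY : Y.Nonempty) (q : EuclideanSpace ℝ (Fin k) → ℝ)
    (hq0 : ∀ y ∈ Y, 0 ≤ q y) (hq1 : ∑ y ∈ Y, q y = 1)
    (φ : EuclideanSpace ℝ (Fin k) → EuclideanSpace ℝ (Fin d))
    (Ω : EuclideanSpace ℝ (Fin k) → ℝ)
    (Ωφ : EuclideanSpace ℝ (Fin d) → ℝ)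
    (pstar : EuclideanSpace ℝ (Fin d) → EuclideanSpace ℝ (Fin k))
    (hΩφdiff : Differentiable ℝ Ωφ)
    (hgrad : ∀ v, gradient Ωφ v = φ (pstar v))
    (L : EuclideanSpace ℝ (Fin d) → EuclideanSpace ℝ (Fin k) → ℝ)
    (hL : ∀ v y, L v y = Ωφ v + Ω y - (inner ℝ v (φ y) : ℝ))
    (ℓ : EuclideanSpace ℝ (Fin d) → ℝ)
    (hℓ : ∀ v, ℓ v = ∑ y ∈ Y, q y * L v y)
    (M : ℝ) (hM : 0 < M)
    (hsmooth : ∀ v₁ v₂, ‖gradient ℓ v₁ - gradient ℓ v₂‖ ≤ M * ‖v₁ - v₂‖)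
    (hnonneg : ∀ v, 0 ≤ ℓ v) :
    ∀ v, ℓ v - sInf (Set.range ℓ)
      ≥ 1 / (2 * M) * ‖φ (pstar v) - ∑ y ∈ Y, q y • φ y‖ ^ 2 :=
  stmt_18_general Y q hq1 φ Ω Ωφ pstar hΩφdiff hgrad L hL ℓ hℓ M hM hsmooth hnonneg
end
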